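/- arXiv:1810.07437 — 2 statements merged into one kernel-verified Lean document; each statement's English description precedes it below -/
import Mathlib

section
/- Let c : ℕ and α, β : ℕ → Prop. Define D : ℕ → Prop by backward recursion: D c = (α c ∧ β c), and for a < c, D a = ((α a → β a) ∧ ((α a ∧ β a) ∨ (¬ α a ∧ D (a+1)))). If k₀ ≤ c is the least index such that α k₀ holds, then for every a ≤ k₀ we have D a ↔ β k₀. -/
theorem stmt_2 (c : ℕ) (α β D : ℕ → Prop)
    (hDc : D c ↔ (α c ∧ β c))
    (hDa : ∀ a < c, D a ↔ ((α a → β a) ∧ ((α a ∧ β a) ∨ (¬ α a ∧ D (a + 1)))))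
    (k₀ : ℕ) (hk₀c : k₀ ≤ c) (hα : α k₀) (hmin : ∀ i < k₀, ¬ α i) :
    ∀ a ≤ k₀, (D a ↔ β k₀) := by
  have hk : D k₀ ↔ β k₀ := by
    rcases eq_or_lt_of_le hk₀c with h | h
    · subst h; rw [hDc]; tauto
    · rw [hDa k₀ h]; tauto
  intro a ha
  induction' hn : k₀ - a with n ih generalizing a
  · have : a = k₀ := le_antisymm ha (Nat.le_of_sub_eq_zero hn)
    subst this; exact hk
  · have hlt : a < k₀ := by omega
    have := hmin a hlt
    rw [hDa a (lt_of_lt_of_le hlt hk₀c)]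
    have h2 : D (a+1) ↔ β k₀ := ih (a+1) (by omega) (by omega)
    tauto
end

section
/- Let c : ℕ and α, β : ℕ → Prop, and let D : ℕ → Prop be the disjunction with stopping condition, defined by D c = (α c ∧ β c) and D a = ((α a → β a) ∧ ((α a ∧ β a) ∨ (¬ α a ∧ D (a+1)))) for a < c. If k₀ is the least index with k₀ ≤ c such that α k₀ holds, then D 0 ↔ β k₀. -/
theorem stmt_3 (c : ℕ) (α β D : ℕ → Prop)
    (hDc : D c ↔ (α c ∧ β c))
    (hDa : ∀ a < c, D a ↔ ((α a → β a) ∧ ((α a ∧ β a) ∨ (¬ α a ∧ D (a + 1)))))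
    (k₀ : ℕ) (hk₀c : k₀ ≤ c) (hα : α k₀) (hmin : ∀ i < k₀, ¬ α i) :
    D 0 ↔ β k₀ := by
  have key : ∀ n a, a ≤ k₀ → k₀ - a = n → (D a ↔ β k₀) := by
    intro n
    induction n with
    | zero =>
      intro a ha h0
      have : a = k₀ := le_antisymm ha (Nat.sub_eq_zero_iff_le.mp h0)
      subst this
      rcases eq_or_lt_of_le hk₀c with h | h
      · rw [← h] at hDc
        rw [hDc]
        exact ⟨fun h => h.2, fun h => ⟨hα, h⟩⟩
      · rw [hDa a h]
        constructor
        · rintro ⟨h1, _⟩; exact h1 hα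
        · intro hb; exact ⟨fun _ => hb, Or.inl ⟨hα, hb⟩⟩
    | succ n ih =>
      intro a ha hn
      have hak : a < k₀ := by omega
      have hac : a < c := lt_of_lt_of_le hak hk₀c
      have hna : ¬ α a := hmin a hak
      rw [hDa a hac]
      have hd := ih (a + 1) (by omega) (by omega)
      rw [hd]
      constructor
      · rintro ⟨_, (⟨h1, _⟩ | ⟨_, h2⟩)⟩
        · exact absurd h1 hna
        · exact h2
      · intro hb; exact ⟨fun h => absurd h hna, Or.inr ⟨hna, hb⟩⟩
  exact key k₀ 0 (Nat.zero_le _) (by omega)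
end
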